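/- arXiv:1808.02218 — 2 statements merged into one kernel-verified Lean document; each statement's English description precedes it below -/
import Mathlib

section
/- Let α > 2 and β = α/(α−1), so that 1/α + 1/β = 1. Then there is a constant C(α) such that for all a_1 ≥ a_2 > 0, (∫_0^{π/2} (a_1 cos θ + a_2 sin θ)^{−β} dθ)^{1/β} · (∫_0^{π/2} (a_2^{−1} cos θ + a_1^{−1} sin θ)^{−α} dθ)^{1/α} ≤ C(α). -/
/-!
By Jordan's inequalities `sin θ ≥ 2θ/π` and `cos θ ≥ 1 - 2θ/π`, on `[0, π/2]` the function
`a cos θ + b sin θ` lies above the chord `a + (b - a) 2θ/π`, which in turn is at least `b`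
when `b ≤ a`. Integrating the chord exactly gives, for `p > 1` and `0 < b ≤ a`,
`∫ (a cos θ + b sin θ)^(-p) ≤ π p/(p-1) · (b/a) · b^(-p)`. Both factors of the product have
this shape, and for Hölder-conjugate exponents the powers of `a₁` and `a₂` cancel.
-/

open Real MeasureTheory Set

section Chord

variable {a b θ : ℝ}

theorem add_sub_mul_le_mul_cos_add_mul_sin (ha : 0 ≤ a) (hb : 0 ≤ b) (hθ : θ ∈ Icc 0 (π / 2)) :
    a + (b - a) * (2 / π * θ) ≤ a * cos θ + b * sin θ := by
  have hsin := mul_le_sin hθ.1 hθ.2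
  have hcos := one_sub_mul_le_cos hθ.1 hθ.2
  nlinarith [mul_le_mul_of_nonneg_left hsin hb, mul_le_mul_of_nonneg_left hcos ha]

theorem le_add_sub_mul_two_div_pi_mul (hba : b ≤ a) (hθ : θ ∈ Icc 0 (π / 2)) :
    b ≤ a + (b - a) * (2 / π * θ) := by
  have ht : 2 / π * θ ≤ 1 := by
    rw [div_mul_eq_mul_div, div_le_one pi_pos]; linarith [hθ.2]
  nlinarith

theorem le_mul_cos_add_mul_sin (hb : 0 ≤ b) (hba : b ≤ a) (hθ : θ ∈ Icc 0 (π / 2)) :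
    b ≤ a * cos θ + b * sin θ :=
  (le_add_sub_mul_two_div_pi_mul hba hθ).trans
    (add_sub_mul_le_mul_cos_add_mul_sin (hb.trans hba) hb hθ)

end Chord

theorem setIntegral_rpow_neg_le_of_le {μ : Measure ℝ} {f g : ℝ → ℝ} {s : Set ℝ} {p : ℝ}
    (hs : MeasurableSet s) (hp : 0 ≤ p) (hgi : IntegrableOn (fun x ↦ g x ^ (-p)) s μ)
    (hg : ∀ x ∈ s, 0 < g x) (hgf : ∀ x ∈ s, g x ≤ f x) :
    ∫ x in s, f x ^ (-p) ∂μ ≤ ∫ x in s, g x ^ (-p) ∂μ := by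
  refine integral_mono_of_nonneg ?_ hgi ?_ <;>
    filter_upwards [ae_restrict_mem hs] with x hx
  · exact rpow_nonneg ((hg x hx).trans_le (hgf x hx)).le _
  · exact rpow_le_rpow_of_nonpos (hg x hx) (hgf x hx) (neg_nonpos.2 hp)

theorem integral_add_sub_mul_rpow_neg {a b p : ℝ} (ha : 0 < a) (hb : 0 < b) (hab : a ≠ b)
    (hp : p ≠ 1) :
    ∫ θ in Icc 0 (π / 2), (a + (b - a) * (2 / π * θ)) ^ (-p)
      = π / 2 * (b ^ (1 - p) - a ^ (1 - p)) / ((1 - p) * (b - a)) := by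
  have hc : (b - a) * (2 / π) ≠ 0 := mul_ne_zero (sub_ne_zero.2 hab.symm) (by positivity)
  have h0 : (0 : ℝ) ∉ uIcc a b := fun h ↦ by
    rcases mem_uIcc.1 h with ⟨h, -⟩ | ⟨h, -⟩ <;> linarith
  rw [integral_Icc_eq_integral_Ioc, ← intervalIntegral.integral_of_le (by positivity)]
  simp_rw [show ∀ θ : ℝ, a + (b - a) * (2 / π * θ) = (b - a) * (2 / π) * θ + a by intro; ring]
  rw [intervalIntegral.integral_comp_mul_add (fun x ↦ x ^ (-p)) hc,
    show (b - a) * (2 / π) * (π / 2) + a = b by field_simp; ring, mul_zero, zero_add,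
    integral_rpow (Or.inr ⟨by contrapose! hp; linarith, h0⟩), smul_eq_mul,
    show -p + 1 = 1 - p by ring]
  field_simp

theorem integral_mul_cos_add_mul_sin_rpow_neg_le {a b p : ℝ} (hp : 1 < p) (hb : 0 < b)
    (hba : b ≤ a) :
    ∫ θ in Icc 0 (π / 2), (a * cos θ + b * sin θ) ^ (-p)
      ≤ π * (p / (p - 1)) * (b / a) * b ^ (-p) := by
  have ha : 0 < a := hb.trans_le hba
  have hp₀ : 0 < p - 1 := sub_pos.2 hp
  -- The chord bound degenerates as `a → b`, so near the square use the floor `b` instead.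
  rcases le_or_gt a (2 * b) with hab | hab
  · calc ∫ θ in Icc 0 (π / 2), (a * cos θ + b * sin θ) ^ (-p)
          ≤ ∫ θ in Icc 0 (π / 2), b ^ (-p) :=
            setIntegral_rpow_neg_le_of_le measurableSet_Icc (by linarith)
              (integrableOn_const (by simp)) (fun _ _ ↦ hb)
              (fun _ hθ ↦ le_mul_cos_add_mul_sin hb.le hba hθ)
        _ = π * 1 * (1 / 2) * b ^ (-p) := by
            rw [setIntegral_const, Real.volume_real_Icc_of_le (by positivity), smul_eq_mul]
            ring
        _ ≤ π * (p / (p - 1)) * (b / a) * b ^ (-p) := by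
            gcongr π * ?_ * ?_ * _
            · rw [le_div_iff₀ hp₀]; linarith
            · rw [le_div_iff₀ ha]; linarith
  · have hchord : ∀ θ ∈ Icc 0 (π / 2), 0 < a + (b - a) * (2 / π * θ) :=
      fun _ hθ ↦ hb.trans_le (le_add_sub_mul_two_div_pi_mul hba hθ)
    calc ∫ θ in Icc 0 (π / 2), (a * cos θ + b * sin θ) ^ (-p)
          ≤ ∫ θ in Icc 0 (π / 2), (a + (b - a) * (2 / π * θ)) ^ (-p) :=
            setIntegral_rpow_neg_le_of_le measurableSet_Icc (by linarith)
              ((continuousOn_const.add (by fun_prop)).rpow_const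
                (fun θ hθ ↦ Or.inl (hchord θ hθ).ne')).integrableOn_Icc
              hchord (fun _ hθ ↦ add_sub_mul_le_mul_cos_add_mul_sin ha.le hb.le hθ)
        _ = π / 2 * (b ^ (1 - p) - a ^ (1 - p)) / ((1 - p) * (b - a)) :=
            integral_add_sub_mul_rpow_neg ha hb (by linarith : b < a).ne' hp.ne'
        _ ≤ π / 2 * b ^ (1 - p) / ((p - 1) * (a - b)) := by
            rw [show (1 - p) * (b - a) = (p - 1) * (a - b) by ring]
            gcongr
            linarith [rpow_nonneg ha.le (1 - p)]
        _ = π * (a / (2 * (a - b))) / (p - 1) * (b / a) * b ^ (-p) := by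
            rw [sub_eq_add_neg, rpow_add hb, rpow_one]
            field_simp
        _ ≤ π * (p / (p - 1)) * (b / a) * b ^ (-p) := by
            rw [mul_div_assoc]
            gcongr
            rw [div_le_iff₀ (by linarith)]; nlinarith

theorem mul_rpow_neg_rpow_one_div {c x p : ℝ} (hc : 0 ≤ c) (hx : 0 < x) (hp : p ≠ 0) :
    (c * x ^ (-p)) ^ (1 / p) = c ^ (1 / p) * x⁻¹ := by
  rw [mul_rpow hc (rpow_nonneg hx.le _), ← rpow_mul hx.le, neg_mul, mul_one_div_cancel hp,
    rpow_neg_one]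

theorem Real.HolderConjugate.rpow_integral_mul_rpow_integral_le {p q a₁ a₂ : ℝ}
    (hpq : p.HolderConjugate q) (ha₂ : 0 < a₂) (h : a₂ ≤ a₁) :
    (∫ θ in Icc 0 (π / 2), (a₁ * cos θ + a₂ * sin θ) ^ (-q)) ^ (1 / q) *
      (∫ θ in Icc 0 (π / 2), (a₂⁻¹ * cos θ + a₁⁻¹ * sin θ) ^ (-p)) ^ (1 / p)
      ≤ (π * p) ^ (1 / q) * (π * q) ^ (1 / p) := by
  have ha₁ : 0 < a₁ := ha₂.trans_le h
  have hX := integral_mul_cos_add_mul_sin_rpow_neg_le hpq.symm.lt ha₂ h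
  have hY := integral_mul_cos_add_mul_sin_rpow_neg_le hpq.lt (inv_pos.2 ha₁) (inv_anti₀ ha₂ h)
  rw [← hpq.symm.conjugate_eq] at hX
  rw [← hpq.conjugate_eq, inv_div_inv] at hY
  have hX₀ : 0 ≤ ∫ θ in Icc 0 (π / 2), (a₁ * cos θ + a₂ * sin θ) ^ (-q) :=
    setIntegral_nonneg measurableSet_Icc fun θ hθ ↦
      rpow_nonneg (ha₂.le.trans (le_mul_cos_add_mul_sin ha₂.le h hθ)) _
  have hY₀ : 0 ≤ ∫ θ in Icc 0 (π / 2), (a₂⁻¹ * cos θ + a₁⁻¹ * sin θ) ^ (-p) :=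
    setIntegral_nonneg measurableSet_Icc fun θ hθ ↦ rpow_nonneg ((inv_pos.2 ha₁).le.trans
      (le_mul_cos_add_mul_sin (inv_pos.2 ha₁).le (inv_anti₀ ha₂ h) hθ)) _
  have hp := hpq.pos
  have hq := hpq.symm.pos
  calc _ ≤ (π * p * (a₂ / a₁) * a₂ ^ (-q)) ^ (1 / q) *
          (π * q * (a₂ / a₁) * a₁⁻¹ ^ (-p)) ^ (1 / p) := by gcongr
    _ = (π * p) ^ (1 / q) * (π * q) ^ (1 / p) * (a₂ / a₁) ^ (1 / q + 1 / p) * (a₁ / a₂) := by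
        rw [mul_rpow_neg_rpow_one_div (by positivity) ha₂ hq.ne',
          mul_rpow_neg_rpow_one_div (by positivity) (inv_pos.2 ha₁) hp.ne',
          mul_rpow (x := π * p) (by positivity) (by positivity),
          mul_rpow (x := π * q) (by positivity) (by positivity),
          rpow_add (by positivity)]
        field_simp
    _ = (π * p) ^ (1 / q) * (π * q) ^ (1 / p) := by
        rw [add_comm, hpq.one_div_add_one_div, div_one, rpow_one]
        field_simp

/-- The two-dimensional (`n = 1`) case of the generalised Blaschke–Santaló inequality
for rhombi: for `α > 2` and `β = α/(α-1)` (so `1/α + 1/β = 1`), the product of the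
normalised integrals is bounded by a constant depending only on `α`. -/
theorem two_dim_blaschke_santalo_rhombus (α : ℝ) (hα : 2 < α) :
    ∃ C : ℝ, ∀ a₁ a₂ : ℝ, 0 < a₂ → a₂ ≤ a₁ →
      (∫ θ in Set.Icc 0 (π/2),
          (a₁ * Real.cos θ + a₂ * Real.sin θ) ^ (-(α/(α-1)))) ^ (1/(α/(α-1))) *
      (∫ θ in Set.Icc 0 (π/2),
          (a₂⁻¹ * Real.cos θ + a₁⁻¹ * Real.sin θ) ^ (-α)) ^ (1/α) ≤ C :=
  ⟨(π * α) ^ (1 / (α / (α - 1))) * (π * (α / (α - 1))) ^ (1 / α), fun _ _ ↦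
    (HolderConjugate.conjExponent (by linarith)).rpow_integral_mul_rpow_integral_le⟩
end

section
/- Let n ≥ 2, k an integer with 1 ≤ k ≤ n−1, and k < β < k+1. There is a constant C(n,β) such that for all positive reals a_1 ≥ ... ≥ a_{n+1} with consecutive ratios a_i/a_{i+1} ≥ √2, S(β; a_1,...,a_{n+1}) ≤ C(n,β)·a_1^{−1}⋯a_k^{−1}·a_{k+1}^{−β+k}, where S is the first-octant spherical integral of r_{D^{-1}}^β. -/
open Real MeasureTheory Set

/-- `S β a` is the spherical-coordinates expression for the integral over the first
octant of `S^n` of the `β`-th power of the radial function of the rhombus with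
vertices `±(1/aᵢ)eᵢ`:
`S(β; a₁,…,a_{n+1}) = ∫_{[0,π/2]^n} sin^{n−1}θ₁ ⋯ sin θ_{n−1}
  / (a₁ cos θ₁ + a₂ sin θ₁ cos θ₂ + ⋯ + a_{n+1} sin θ₁ ⋯ sin θ_n)^β dθ₁⋯dθ_n`. -/
noncomputable def S (n : ℕ) (β : ℝ) (a : Fin (n+1) → ℝ) : ℝ :=
  ∫ θ in Set.univ.pi (fun _ : Fin n => Set.Icc 0 (π/2)),
    (∏ j : Fin n, Real.sin (θ j) ^ (n - 1 - (j : ℕ))) /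
      (∑ i : Fin (n+1),
        a i * (∏ j : Fin n, if (j : ℕ) < (i : ℕ) then Real.sin (θ j) else 1) *
          (if h : (i : ℕ) < n then Real.cos (θ ⟨i, h⟩) else 1)) ^ β

/-!
Integrate out the first angle. If `b` is the gauge of the tail `(a₂, …, a_{m+1})` at the remaining
angles, the inner integrand is at most `(a₁ cos t + b sin t)^{-γ}`, and since `b ≤ m a₁` the
denominator is bounded below by a multiple of `a₁ (1 - 2t/π) + b`, whose `-γ`-th power integrates
explicitly. For `γ > 1` this gives `≲ a₁⁻¹ b^{1-γ}`, the integrand of `S(γ - 1; a₂, …)` one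
dimension lower; for `0 ≤ γ < 1` it gives `≲ a₁^{-γ}`. Peeling off `k` angles this way bounds
`S(β; a)` by `a₁⁻¹ ⋯ a_k⁻¹ a_{k+1}^{k-β}` up to a constant.
-/

open scoped ENNReal

noncomputable section

def angleCube (m : ℕ) : Set (Fin m → ℝ) := univ.pi fun _ => Icc 0 (π / 2)

def sphJacobian (m : ℕ) (θ : Fin m → ℝ) : ℝ := ∏ j : Fin m, sin (θ j) ^ (m - 1 - (j : ℕ))

/-- At the point `x` of the first octant of the sphere with spherical coordinates `θ`, this is
`∑ aᵢ xᵢ`, the reciprocal of the radial function of the rhombus. -/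
def sphGauge (m : ℕ) (a : Fin (m + 1) → ℝ) (θ : Fin m → ℝ) : ℝ :=
  ∑ i : Fin (m + 1), a i * (∏ j : Fin m, if (j : ℕ) < (i : ℕ) then sin (θ j) else 1) *
    (if h : (i : ℕ) < m then cos (θ ⟨i, h⟩) else 1)

def lintegralS (m : ℕ) (γ : ℝ) (a : Fin (m + 1) → ℝ) : ℝ≥0∞ :=
  ∫⁻ θ in angleCube m, ENNReal.ofReal (sphJacobian m θ / sphGauge m a θ ^ γ)

end

lemma sin_nonneg_of_mem_Icc_zero_pi_div_two {t : ℝ} (ht : t ∈ Icc 0 (π / 2)) : 0 ≤ sin t :=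
  sin_nonneg_of_nonneg_of_le_pi ht.1 (by linarith [ht.2, pi_pos])

lemma cos_nonneg_of_mem_Icc_zero_pi_div_two {t : ℝ} (ht : t ∈ Icc 0 (π / 2)) : 0 ≤ cos t :=
  cos_nonneg_of_mem_Icc ⟨by linarith [ht.1, pi_pos], ht.2⟩

lemma one_le_cos_add_sin {t : ℝ} (ht : t ∈ Icc 0 (π / 2)) : 1 ≤ cos t + sin t := by
  have hc := cos_nonneg_of_mem_Icc_zero_pi_div_two ht
  have hs := sin_nonneg_of_mem_Icc_zero_pi_div_two ht
  nlinarith [cos_sq_add_sin_sq t, mul_nonneg hc hs]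

lemma mul_cos_add_sin_mul_pos {a b t : ℝ} (ht : t ∈ Icc 0 (π / 2)) (ha : 0 < a) (hb : 0 < b) :
    0 < a * cos t + sin t * b := by
  have hc := cos_nonneg_of_mem_Icc_zero_pi_div_two ht
  have hs := sin_nonneg_of_mem_Icc_zero_pi_div_two ht
  rcases le_total a b with h | h <;>
    nlinarith [one_le_cos_add_sin ht, mul_le_mul_of_nonneg_left h hs,
      mul_le_mul_of_nonneg_left h hc]

lemma one_sub_two_div_pi_mul_nonneg {t : ℝ} (ht : t ∈ Icc 0 (π / 2)) : 0 ≤ 1 - 2 / π * t := by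
  rw [sub_nonneg, div_mul_eq_mul_div, div_le_one pi_pos]
  linarith [ht.2]

lemma one_sub_mul_add_le_mul_cos_add {a b M t : ℝ} (ht : t ∈ Icc 0 (π / 2)) (ha : 0 ≤ a)
    (hb : 0 ≤ b) (hM : 0 ≤ M) (hbM : b ≤ M * a) :
    a * (1 - 2 / π * t) + b ≤ (1 + M) * (a * cos t + sin t * b) := by
  have hc := cos_nonneg_of_mem_Icc_zero_pi_div_two ht
  have hs := sin_nonneg_of_mem_Icc_zero_pi_div_two ht
  -- `1 - 2t/π ≤ cos t`, `b ≤ b (cos t + sin t)` and `b cos t ≤ M a cos t`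
  nlinarith [mul_le_mul_of_nonneg_left (one_sub_mul_le_cos ht.1 ht.2) ha,
    mul_le_mul_of_nonneg_left (one_le_cos_add_sin ht) hb,
    mul_le_mul_of_nonneg_right hbM hc, mul_nonneg hM (mul_nonneg hs hb)]

lemma integral_one_sub_mul_add_rpow {a b γ : ℝ} (ha : 0 < a) (hb : 0 < b) (hγ : γ ≠ 1) :
    ∫ t in (0)..(π / 2), (a * (1 - 2 / π * t) + b) ^ (-γ)
      = π / (2 * a) * (((a + b) ^ (1 - γ) - b ^ (1 - γ)) / (1 - γ)) := by
  have hπ := pi_pos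
  have hc : -(2 * a / π) ≠ 0 := neg_ne_zero.2 (by positivity)
  have hsub := intervalIntegral.integral_comp_mul_add (fun x : ℝ => x ^ (-γ)) hc (a + b)
    (a := 0) (b := π / 2)
  rw [mul_zero, zero_add, show -(2 * a / π) * (π / 2) + (a + b) = b by field_simp; ring,
    integral_rpow (Or.inr ⟨by contrapose! hγ; linarith, notMem_uIcc_of_lt (by linarith) hb⟩),
    show -γ + 1 = 1 - γ by ring] at hsub
  convert hsub using 1
  · congr 1; ext t; congr 1; ring
  · rw [smul_eq_mul]
    field_simp
    ring

lemma sin_pow_div_rpow_le {m : ℕ} {a b M γ t : ℝ} (ht : t ∈ Icc 0 (π / 2)) (ha : 0 < a)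
    (hb : 0 < b) (hM : 0 ≤ M) (hbM : b ≤ M * a) (hγ : 0 ≤ γ) :
    sin t ^ m / (a * cos t + sin t * b) ^ γ ≤ (1 + M) ^ γ * (a * (1 - 2 / π * t) + b) ^ (-γ) := by
  have hu : 0 < a * (1 - 2 / π * t) + b := by
    have := one_sub_two_div_pi_mul_nonneg ht
    positivity
  have hD := one_sub_mul_add_le_mul_cos_add ht ha.le hb.le hM hbM
  have hDpos : 0 < a * cos t + sin t * b := pos_of_mul_pos_right (hu.trans_le hD) (by linarith)
  have hs := sin_nonneg_of_mem_Icc_zero_pi_div_two ht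
  calc sin t ^ m / (a * cos t + sin t * b) ^ γ
      ≤ 1 / ((a * (1 - 2 / π * t) + b) / (1 + M)) ^ γ := by
        gcongr
        · exact pow_le_one₀ hs (sin_le_one t)
        · rwa [div_le_iff₀' (by linarith)]
    _ = (1 + M) ^ γ * (a * (1 - 2 / π * t) + b) ^ (-γ) := by
        rw [div_rpow hu.le (by linarith), rpow_neg hu.le]
        field_simp

lemma setLIntegral_sin_pow_div_rpow_le {m : ℕ} {a b M γ : ℝ} (ha : 0 < a) (hb : 0 < b)
    (hM : 0 ≤ M) (hbM : b ≤ M * a) (hγ : 0 ≤ γ) (hγ1 : γ ≠ 1) :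
    ∫⁻ t in Icc 0 (π / 2), ENNReal.ofReal (sin t ^ m / (a * cos t + sin t * b) ^ γ)
      ≤ ENNReal.ofReal
          ((1 + M) ^ γ * (π / (2 * a) * (((a + b) ^ (1 - γ) - b ^ (1 - γ)) / (1 - γ)))) := by
  set g : ℝ → ℝ := fun t => (1 + M) ^ γ * (a * (1 - 2 / π * t) + b) ^ (-γ)
  have hg : IntegrableOn g (Icc 0 (π / 2)) := by
    refine ContinuousOn.integrableOn_Icc (ContinuousOn.mul continuousOn_const ?_)
    refine ContinuousOn.rpow_const (by fun_prop) fun t ht => Or.inl ?_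
    have := one_sub_two_div_pi_mul_nonneg ht
    positivity
  calc ∫⁻ t in Icc 0 (π / 2), ENNReal.ofReal (sin t ^ m / (a * cos t + sin t * b) ^ γ)
      ≤ ∫⁻ t in Icc 0 (π / 2), ENNReal.ofReal (g t) :=
        setLIntegral_mono' measurableSet_Icc fun t ht =>
          ENNReal.ofReal_le_ofReal (sin_pow_div_rpow_le ht ha hb hM hbM hγ)
    _ = ENNReal.ofReal (∫ t in Icc 0 (π / 2), g t) := by
        refine (ofReal_integral_eq_lintegral_ofReal hg ?_).symm
        refine (ae_restrict_mem measurableSet_Icc).mono fun t ht => ?_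
        have := one_sub_two_div_pi_mul_nonneg ht
        positivity
    _ = _ := by
        rw [integral_Icc_eq_integral_Ioc, ← intervalIntegral.integral_of_le (by positivity),
          intervalIntegral.integral_const_mul, integral_one_sub_mul_add_rpow ha hb hγ1]

lemma setLIntegral_sin_pow_div_rpow_le_of_lt_one {m : ℕ} {a b M γ : ℝ} (ha : 0 < a) (hb : 0 < b)
    (hM : 0 ≤ M) (hbM : b ≤ M * a) (hγ0 : 0 ≤ γ) (hγ1 : γ < 1) :
    ∫⁻ t in Icc 0 (π / 2), ENNReal.ofReal (sin t ^ m / (a * cos t + sin t * b) ^ γ)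
      ≤ ENNReal.ofReal (π / 2 * (1 + M) / (1 - γ) * a ^ (-γ)) := by
  refine (setLIntegral_sin_pow_div_rpow_le ha hb hM hbM hγ0 hγ1.ne).trans
    (ENNReal.ofReal_le_ofReal ?_)
  have h1γ : 0 < 1 - γ := by linarith
  calc (1 + M) ^ γ * (π / (2 * a) * (((a + b) ^ (1 - γ) - b ^ (1 - γ)) / (1 - γ)))
      ≤ (1 + M) ^ γ * (π / (2 * a) * (((1 + M) * a) ^ (1 - γ) / (1 - γ))) := by
        gcongr
        exact (sub_le_self _ (rpow_nonneg hb.le _)).trans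
          (rpow_le_rpow (by positivity) (by linarith) h1γ.le)
    _ = π / 2 * (1 + M) / (1 - γ) * a ^ (-γ) := by
        rw [mul_rpow (by linarith) ha.le, rpow_sub (by linarith), rpow_sub ha, rpow_one, rpow_one,
          rpow_neg ha.le]
        field_simp

lemma setLIntegral_sin_pow_div_rpow_le_of_one_lt {m : ℕ} {a b M γ : ℝ} (ha : 0 < a) (hb : 0 < b)
    (hM : 0 ≤ M) (hbM : b ≤ M * a) (hγ : 1 < γ) :
    ∫⁻ t in Icc 0 (π / 2), ENNReal.ofReal (sin t ^ m / (a * cos t + sin t * b) ^ γ)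
      ≤ ENNReal.ofReal ((1 + M) ^ γ * π / (2 * (γ - 1)) * a⁻¹ / b ^ (γ - 1)) := by
  refine (setLIntegral_sin_pow_div_rpow_le ha hb hM hbM (by linarith) hγ.ne').trans
    (ENNReal.ofReal_le_ofReal ?_)
  have hγ' : 0 < γ - 1 := by linarith
  calc (1 + M) ^ γ * (π / (2 * a) * (((a + b) ^ (1 - γ) - b ^ (1 - γ)) / (1 - γ)))
      = (1 + M) ^ γ * (π / (2 * a) * ((b ^ (1 - γ) - (a + b) ^ (1 - γ)) / (γ - 1))) := by
        rw [← neg_sub (b ^ _), ← neg_sub γ 1, neg_div_neg_eq]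
    _ ≤ (1 + M) ^ γ * (π / (2 * a) * (b ^ (1 - γ) / (γ - 1))) := by
        gcongr
        exact sub_le_self _ (rpow_nonneg (by positivity) _)
    _ = (1 + M) ^ γ * π / (2 * (γ - 1)) * a⁻¹ / b ^ (γ - 1) := by
        rw [show 1 - γ = -(γ - 1) by ring, rpow_neg hb.le]
        field_simp

lemma measurableSet_angleCube (m : ℕ) : MeasurableSet (angleCube m) :=
  MeasurableSet.univ_pi fun _ => measurableSet_Icc

lemma volume_angleCube (m : ℕ) : volume (angleCube m) = ENNReal.ofReal ((π / 2) ^ m) := by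
  rw [angleCube, volume_pi_pi]
  simp [Real.volume_Icc, ENNReal.ofReal_pow pi_div_two_pos.le]

lemma cons_mem_angleCube {m : ℕ} {t : ℝ} {y : Fin m → ℝ} :
    Fin.cons t y ∈ angleCube (m + 1) ↔ t ∈ Icc 0 (π / 2) ∧ y ∈ angleCube m := by
  simp only [angleCube, mem_univ_pi, Fin.forall_fin_succ, Fin.cons_zero, Fin.cons_succ]

lemma sin_mem_Icc_of_mem_angleCube {m : ℕ} {θ : Fin m → ℝ} (hθ : θ ∈ angleCube m) (j : Fin m) :
    sin (θ j) ∈ Icc 0 1 :=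
  ⟨sin_nonneg_of_mem_Icc_zero_pi_div_two (hθ j (mem_univ j)), sin_le_one _⟩

lemma cos_mem_Icc_of_mem_angleCube {m : ℕ} {θ : Fin m → ℝ} (hθ : θ ∈ angleCube m) (j : Fin m) :
    cos (θ j) ∈ Icc 0 1 :=
  ⟨cos_nonneg_of_mem_Icc_zero_pi_div_two (hθ j (mem_univ j)), cos_le_one _⟩

lemma sphJacobian_cons (m : ℕ) (t : ℝ) (y : Fin m → ℝ) :
    sphJacobian (m + 1) (Fin.cons t y) = sin t ^ m * sphJacobian m y := by
  simp only [sphJacobian, Fin.prod_univ_succ, Fin.cons_zero, Fin.cons_succ, Fin.val_zero,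
    Fin.val_succ]
  rw [Nat.add_sub_cancel, Nat.sub_zero]
  congr 1
  exact Finset.prod_congr rfl fun j _ => by rw [Nat.sub_add_eq, Nat.sub_right_comm]

lemma sphGauge_cons (m : ℕ) (a : Fin (m + 2) → ℝ) (t : ℝ) (y : Fin m → ℝ) :
    sphGauge (m + 1) a (Fin.cons t y) = a 0 * cos t + sin t * sphGauge m (Fin.tail a) y := by
  rw [sphGauge, Fin.sum_univ_succ, sphGauge, Finset.mul_sum]
  congr 1
  · simp
  refine Finset.sum_congr rfl fun i _ => ?_
  simp only [Fin.prod_univ_succ, Fin.val_succ, Fin.val_zero, Fin.cons_zero, Fin.cons_succ,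
    add_lt_add_iff_right, Nat.zero_lt_succ, if_true, Fin.tail]
  split_ifs with h
  · rw [show (⟨i + 1, by omega⟩ : Fin (m + 1)) = Fin.succ ⟨i, h⟩ from rfl, Fin.cons_succ]
    ring
  · ring

lemma sphJacobian_nonneg {m : ℕ} {θ : Fin m → ℝ} (hθ : θ ∈ angleCube m) :
    0 ≤ sphJacobian m θ :=
  Finset.prod_nonneg fun j _ => pow_nonneg (sin_mem_Icc_of_mem_angleCube hθ j).1 _

lemma sphJacobian_le_one {m : ℕ} {θ : Fin m → ℝ} (hθ : θ ∈ angleCube m) :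
    sphJacobian m θ ≤ 1 :=
  Finset.prod_le_one (fun j _ => pow_nonneg (sin_mem_Icc_of_mem_angleCube hθ j).1 _) fun j _ =>
    pow_le_one₀ (sin_mem_Icc_of_mem_angleCube hθ j).1 (sin_mem_Icc_of_mem_angleCube hθ j).2

lemma sphGauge_pos {m : ℕ} {a : Fin (m + 1) → ℝ} (ha : ∀ i, 0 < a i) {θ : Fin m → ℝ}
    (hθ : θ ∈ angleCube m) : 0 < sphGauge m a θ := by
  induction m with
  | zero => simpa [sphGauge] using ha 0
  | succ m ih =>
    rw [← Fin.cons_self_tail θ, cons_mem_angleCube] at hθ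
    rw [← Fin.cons_self_tail θ, sphGauge_cons]
    exact mul_cos_add_sin_mul_pos hθ.1 (ha 0) (ih (fun i => ha i.succ) hθ.2)

lemma sphGauge_le_sum {m : ℕ} {a : Fin (m + 1) → ℝ} (ha : ∀ i, 0 ≤ a i) {θ : Fin m → ℝ}
    (hθ : θ ∈ angleCube m) : sphGauge m a θ ≤ ∑ i, a i := by
  refine Finset.sum_le_sum fun i _ => ?_
  have hP : (∏ j : Fin m, if (j : ℕ) < (i : ℕ) then sin (θ j) else 1) ∈ Icc 0 1 := by
    have hs := sin_mem_Icc_of_mem_angleCube hθ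
    refine ⟨Finset.prod_nonneg fun j _ => ?_, Finset.prod_le_one (fun j _ => ?_) fun j _ => ?_⟩ <;>
      split_ifs <;> simp [(hs j).1, (hs j).2]
  have hc : (if h : (i : ℕ) < m then cos (θ ⟨i, h⟩) else 1) ∈ Icc 0 1 := by
    split_ifs
    · exact cos_mem_Icc_of_mem_angleCube hθ _
    · simp
  exact (mul_le_of_le_one_right (mul_nonneg (ha i) hP.1) hc.2).trans
    (mul_le_of_le_one_right (ha i) hP.2)

lemma sphGauge_tail_le {m : ℕ} {a : Fin (m + 2) → ℝ} (ha : ∀ i, 0 ≤ a i) (hanti : Antitone a)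
    {y : Fin m → ℝ} (hy : y ∈ angleCube m) : sphGauge m (Fin.tail a) y ≤ (m + 1) * a 0 := by
  calc sphGauge m (Fin.tail a) y ≤ ∑ i : Fin (m + 1), a i.succ := sphGauge_le_sum (fun i => ha _) hy
    _ ≤ ∑ _i : Fin (m + 1), a 0 := Finset.sum_le_sum fun i _ => hanti (Fin.zero_le _)
    _ = (m + 1) * a 0 := by simp

lemma continuous_sphJacobian (m : ℕ) : Continuous (sphJacobian m) := by
  unfold sphJacobian; fun_prop

lemma continuous_sphGauge (m : ℕ) (a : Fin (m + 1) → ℝ) : Continuous (sphGauge m a) :=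
  continuous_finsetSum _ fun i _ => (continuous_const.mul (continuous_finsetProd _ fun j _ => by
    split_ifs <;> fun_prop)).mul (by split_ifs <;> fun_prop)

lemma setLIntegral_univ_pi_fin_succ {m : ℕ} (s : Set ℝ) {F : (Fin (m + 1) → ℝ) → ℝ≥0∞}
    (hF : Measurable F) :
    ∫⁻ θ in univ.pi fun _ => s, F θ = ∫⁻ y in univ.pi fun _ => s, ∫⁻ t in s, F (Fin.cons t y) := by
  simp only [volume_pi, Measure.restrict_pi_pi]
  have e := (measurePreserving_piFinSuccAbove (fun _ : Fin (m + 1) => volume.restrict s) 0).symm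
  rw [← e.lintegral_comp hF]
  have := lintegral_prod_symm' (α := ℝ) (β := Fin m → ℝ) (μ := volume.restrict s)
    (ν := Measure.pi fun _ => volume.restrict s) _ (hF.comp e.measurable)
  simp only [Function.comp_apply, MeasurableEquiv.piFinSuccAbove_symm_apply,
    Fin.insertNthEquiv_zero] at this ⊢
  exact this

lemma lintegralS_succ (m : ℕ) (γ : ℝ) (a : Fin (m + 2) → ℝ) :
    lintegralS (m + 1) γ a = ∫⁻ y in angleCube m, ENNReal.ofReal (sphJacobian m y) *
      ∫⁻ t in Icc 0 (π / 2),
        ENNReal.ofReal (sin t ^ m / (a 0 * cos t + sin t * sphGauge m (Fin.tail a) y) ^ γ) := by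
  rw [lintegralS, angleCube, setLIntegral_univ_pi_fin_succ]
  · refine setLIntegral_congr_fun (measurableSet_angleCube m) fun y hy => ?_
    rw [← lintegral_const_mul' _ _ ENNReal.ofReal_ne_top]
    refine lintegral_congr fun t => ?_
    rw [sphJacobian_cons, sphGauge_cons, ← ENNReal.ofReal_mul (sphJacobian_nonneg hy), mul_comm,
      mul_div_assoc]
  · exact ((continuous_sphJacobian _).measurable.div
      ((continuous_sphGauge _ a).measurable.pow_const γ)).ennreal_ofReal

lemma lintegralS_succ_le_of_lt_one {m : ℕ} {γ : ℝ} (hγ0 : 0 ≤ γ) (hγ1 : γ < 1)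
    {a : Fin (m + 2) → ℝ} (ha : ∀ i, 0 < a i) (hanti : Antitone a) :
    lintegralS (m + 1) γ a ≤
      ENNReal.ofReal ((π / 2) ^ (m + 1) * (m + 2) / (1 - γ) * a 0 ^ (-γ)) := by
  have ha0 := ha 0
  have hγ : 0 < 1 - γ := by linarith
  calc lintegralS (m + 1) γ a
      ≤ ∫⁻ _ in angleCube m, ENNReal.ofReal (π / 2 * (1 + (m + 1)) / (1 - γ) * a 0 ^ (-γ)) := by
        rw [lintegralS_succ]
        refine setLIntegral_mono' (measurableSet_angleCube m) fun y hy => ?_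
        refine (mul_le_of_le_one_left' (ENNReal.ofReal_le_one.2 (sphJacobian_le_one hy))).trans ?_
        exact setLIntegral_sin_pow_div_rpow_le_of_lt_one ha0 (sphGauge_pos (fun i => ha _) hy)
          (by positivity) (sphGauge_tail_le (fun i => (ha i).le) hanti hy) hγ0 hγ1
    _ = ENNReal.ofReal ((π / 2) ^ (m + 1) * (m + 2) / (1 - γ) * a 0 ^ (-γ)) := by
        rw [setLIntegral_const, volume_angleCube, ← ENNReal.ofReal_mul (by positivity)]
        congr 1
        ring

lemma lintegralS_succ_le_of_one_lt {m : ℕ} {γ : ℝ} (hγ : 1 < γ)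
    {a : Fin (m + 2) → ℝ} (ha : ∀ i, 0 < a i) (hanti : Antitone a) :
    lintegralS (m + 1) γ a ≤ ENNReal.ofReal ((m + 2) ^ γ * π / (2 * (γ - 1)) * (a 0)⁻¹) *
      lintegralS m (γ - 1) (Fin.tail a) := by
  rw [lintegralS_succ, lintegralS, ← lintegral_const_mul' _ _ ENNReal.ofReal_ne_top]
  refine setLIntegral_mono' (measurableSet_angleCube m) fun y hy => ?_
  have hb := sphGauge_pos (fun i => ha i.succ) hy
  calc _ ≤ ENNReal.ofReal (sphJacobian m y) * ENNReal.ofReal ((1 + (m + 1)) ^ γ * π /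
        (2 * (γ - 1)) * (a 0)⁻¹ / sphGauge m (Fin.tail a) y ^ (γ - 1)) := by
        gcongr
        exact setLIntegral_sin_pow_div_rpow_le_of_one_lt (ha 0) hb (by positivity)
          (sphGauge_tail_le (fun i => (ha i).le) hanti hy) hγ
    _ = _ := by
        have := ha 0
        have : 0 < γ - 1 := by linarith
        rw [← ENNReal.ofReal_mul (sphJacobian_nonneg hy), ← ENNReal.ofReal_mul (by positivity)]
        rw [show (1 : ℝ) + (m + 1) = m + 2 by ring]
        congr 1
        ring

lemma S_eq_toReal_lintegralS {n : ℕ} {β : ℝ} {a : Fin (n + 1) → ℝ} (ha : ∀ i, 0 < a i) :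
    S n β a = (lintegralS n β a).toReal := by
  refine integral_eq_lintegral_of_nonneg_ae ?_ ?_
  · exact (ae_restrict_mem (measurableSet_angleCube n)).mono fun θ hθ =>
      div_nonneg (sphJacobian_nonneg hθ) (rpow_nonneg (sphGauge_pos ha hθ).le _)
  · exact ((continuous_sphJacobian n).measurable.div
      ((continuous_sphGauge n a).measurable.pow_const β)).aestronglyMeasurable

lemma exists_lintegralS_le (k : ℕ) {m : ℕ} {γ : ℝ} (hkm : k < m) (hkγ : k < γ) (hγk : γ < k + 1) :
    ∃ C : ℝ, 0 ≤ C ∧ ∀ a : Fin (m + 1) → ℝ, (∀ i, 0 < a i) → Antitone a →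
      lintegralS m γ a ≤ ENNReal.ofReal (C * (∏ i : Fin k, (a (Fin.castLE (by omega) i))⁻¹) *
        a ⟨k, by omega⟩ ^ ((k : ℝ) - γ)) := by
  induction k generalizing m γ with
  | zero =>
    obtain ⟨m, rfl⟩ : ∃ m', m = m' + 1 := ⟨m - 1, by omega⟩
    simp only [CharP.cast_eq_zero, zero_add] at hkγ hγk
    have hγ : 0 < 1 - γ := by linarith
    refine ⟨(π / 2) ^ (m + 1) * (m + 2) / (1 - γ), by positivity, fun a ha hanti => ?_⟩
    simpa using lintegralS_succ_le_of_lt_one hkγ.le hγk ha hanti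
  | succ k ih =>
    obtain ⟨m, rfl⟩ : ∃ m', m = m' + 1 := ⟨m - 1, by omega⟩
    push_cast at hkγ hγk
    obtain ⟨C, hC, hbound⟩ := ih (m := m) (γ := γ - 1) (by omega) (by linarith) (by linarith)
    have hγ : 0 < γ - 1 := by linarith
    refine ⟨((m : ℝ) + 2) ^ γ * π / (2 * (γ - 1)) * C, by positivity, fun a ha hanti => ?_⟩
    have ha0 := ha 0
    calc lintegralS (m + 1) γ a
        ≤ ENNReal.ofReal ((m + 2) ^ γ * π / (2 * (γ - 1)) * (a 0)⁻¹) *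
            lintegralS m (γ - 1) (Fin.tail a) :=
          lintegralS_succ_le_of_one_lt (by linarith) ha hanti
      _ ≤ ENNReal.ofReal ((m + 2) ^ γ * π / (2 * (γ - 1)) * (a 0)⁻¹) *
            ENNReal.ofReal (C * (∏ i : Fin k, (Fin.tail a (Fin.castLE (by omega) i))⁻¹) *
              Fin.tail a ⟨k, by omega⟩ ^ ((k : ℝ) - (γ - 1))) := by
          gcongr
          exact hbound _ (fun i => ha _) (hanti.comp_monotone Fin.strictMono_succ.monotone)
      _ = _ := by
          rw [← ENNReal.ofReal_mul (by positivity), Fin.prod_univ_succ]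
          congr 1
          rw [show (k : ℝ) - (γ - 1) = ((k + 1 : ℕ) : ℝ) - γ by push_cast; ring]
          change _ = _ * ((a 0)⁻¹ * ∏ i : Fin k, (Fin.tail a (Fin.castLE (by omega) i))⁻¹) *
            Fin.tail a ⟨k, by omega⟩ ^ _
          ring

theorem S_bound_k_lt_beta_lt_k_add_one (n : ℕ) (hn : 2 ≤ n) (k : ℕ)
    (hk2 : k ≤ n - 1) (β : ℝ) (hkβ : (k : ℝ) < β) (hβk : β < (k : ℝ) + 1) :
    ∃ C : ℝ, ∀ a : Fin (n+1) → ℝ, (∀ i, 0 < a i) → Antitone a →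
      (∀ i : Fin n, Real.sqrt 2 * a i.succ ≤ a i.castSucc) →
      S n β a ≤ C * (∏ i : Fin k, (a (Fin.castLE (by omega) i))⁻¹) *
        a ⟨k, by omega⟩ ^ ((k : ℝ) - β) := by
  obtain ⟨C, hC, hbound⟩ := exists_lintegralS_le k (m := n) (by omega) hkβ hβk
  refine ⟨C, fun a ha hanti _ => ?_⟩
  rw [S_eq_toReal_lintegralS ha]
  refine ENNReal.toReal_le_of_le_ofReal ?_ (hbound a ha hanti)
  exact mul_nonneg (mul_nonneg hC (Finset.prod_nonneg fun i _ => inv_nonneg.2 (ha _).le))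
    (rpow_nonneg (ha _).le _)
end
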